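/- (Characterization of the sail for intersecting lines.) Let α, β be real affine forms on ℝ² with linearly independent linear parts, and let q be the unique intersection point of H_α = {α=0} and H_β = {β=0}. For x, y ∈ ℝ², x + iy ∈ S(α,β) if and only if EITHER (a) α(x)β(x) < 0 and y is tangent to the line through x and q (i.e., y ∈ ℝ·(x - q)), OR (b) x = q and y ≠ 0 and the line x + ℝ·y meets the open region {α·β < 0}. -/

import Mathlib

/-!
Write `A + iA' = α(x + iy)` and `C + iC' = β(x + iy)`. The quotient is a negative real exactly
when the vectors `(A, A')` and `(C, C')` are antiparallel: `AC' - A'C = 0` and `AC + A'C' < 0`.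
If `(A, C) ≠ 0` this says `(A', C') = s • (A, C)` with `AC < 0`; otherwise `A = C = 0` and
`A'C' < 0`. Since `a`, `c` are independent, `v ↦ (a·v, c·v)` is injective; as
`(A, C) = (a·(x - q), c·(x - q))` and `(A', C') = (a·y, c·y)`, the first case means
`y = s • (x - q)` and the second means `x = q`.
-/

open Complex

noncomputable def affC (a : ℝ × ℝ) (b : ℝ) (x y : ℝ × ℝ) : ℂ :=
  (a.1 : ℂ) * ((x.1 : ℂ) + (y.1 : ℂ) * I) +
  (a.2 : ℂ) * ((x.2 : ℂ) + (y.2 : ℂ) * I) + (b : ℂ)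

def sailMem (a : ℝ × ℝ) (b : ℝ) (c : ℝ × ℝ) (d : ℝ) (x y : ℝ × ℝ) : Prop :=
  affC a b x y * affC c d x y ≠ 0 ∧
  ∃ r : ℝ, r < 0 ∧ affC a b x y / affC c d x y = (r : ℂ)

theorem Complex.exists_neg_real_div_eq_iff (z w : ℂ) :
    (z * w ≠ 0 ∧ ∃ r : ℝ, r < 0 ∧ z / w = r) ↔
      z.re * w.im - z.im * w.re = 0 ∧ z.re * w.re + z.im * w.im < 0 := by
  have hnormSq := normSq_apply w
  constructor
  · rintro ⟨hzw, r, hr, hdiv⟩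
    have hw : w ≠ 0 := right_ne_zero_of_mul hzw
    obtain rfl : z = r * w := (div_eq_iff hw).mp hdiv
    simp only [re_ofReal_mul, im_ofReal_mul]
    exact ⟨by ring, by nlinarith [normSq_pos.mpr hw]⟩
  · rintro ⟨hcross, hdot⟩
    have hw : w ≠ 0 := by rintro rfl; simp at hdot
    have hz : z ≠ 0 := by rintro rfl; simp at hdot
    have hpos := normSq_pos.mpr hw
    -- `z / w = z * conj w / |w|²`, and `z * conj w` is real with real part the dot product
    refine ⟨mul_ne_zero hz hw, (z.re * w.re + z.im * w.im) / normSq w,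
      div_neg_of_neg_of_pos hdot hpos, ?_⟩
    rw [div_eq_iff hw, Complex.ext_iff]
    simp only [re_ofReal_mul, im_ofReal_mul]
    constructor <;> field_simp
    · linear_combination z.re * hnormSq + w.im * hcross
    · linear_combination z.im * hnormSq - w.re * hcross

section

variable (a : ℝ × ℝ) (b : ℝ) (x y : ℝ × ℝ)

@[simp] theorem affC_re : (affC a b x y).re = a.1 * x.1 + a.2 * x.2 + b := by
  simp [affC]

@[simp] theorem affC_im : (affC a b x y).im = a.1 * y.1 + a.2 * y.2 := by
  simp [affC]

end

theorem sailMem_iff (a : ℝ × ℝ) (b : ℝ) (c : ℝ × ℝ) (d : ℝ) (x y : ℝ × ℝ) :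
    sailMem a b c d x y ↔
      (a.1 * x.1 + a.2 * x.2 + b) * (c.1 * y.1 + c.2 * y.2) -
          (a.1 * y.1 + a.2 * y.2) * (c.1 * x.1 + c.2 * x.2 + d) = 0 ∧
        (a.1 * x.1 + a.2 * x.2 + b) * (c.1 * x.1 + c.2 * x.2 + d) +
          (a.1 * y.1 + a.2 * y.2) * (c.1 * y.1 + c.2 * y.2) < 0 := by
  rw [sailMem, Complex.exists_neg_real_div_eq_iff, affC_re, affC_re, affC_im, affC_im]

theorem exists_eq_smul_of_cross_eq_zero {A C A' C' : ℝ} (hcross : A * C' - A' * C = 0)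
    (hAC : ¬(A = 0 ∧ C = 0)) : ∃ s : ℝ, A' = s * A ∧ C' = s * C := by
  by_cases hA : A = 0
  · have hC : C ≠ 0 := fun hC => hAC ⟨hA, hC⟩
    refine ⟨C' / C, ?_, by field_simp⟩
    subst hA
    simpa [hC] using hcross
  · refine ⟨A' / A, by field_simp, ?_⟩
    field_simp
    linear_combination hcross

theorem cross_eq_zero_and_dot_neg_iff (A C A' C' : ℝ) :
    A * C' - A' * C = 0 ∧ A * C + A' * C' < 0 ↔
      (A * C < 0 ∧ ∃ s : ℝ, A' = s * A ∧ C' = s * C) ∨ (A = 0 ∧ C = 0 ∧ A' * C' < 0) := by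
  constructor
  · rintro ⟨hcross, hdot⟩
    by_cases hAC : A = 0 ∧ C = 0
    · obtain ⟨rfl, rfl⟩ := hAC
      exact Or.inr ⟨rfl, rfl, by simpa using hdot⟩
    · obtain ⟨s, rfl, rfl⟩ := exists_eq_smul_of_cross_eq_zero hcross hAC
      have hAC_neg : (1 + s ^ 2) * (A * C) < 0 := by linear_combination hdot
      exact Or.inl ⟨neg_of_mul_neg_right hAC_neg (by positivity), s, rfl, rfl⟩
  · rintro (⟨hAC, s, rfl, rfl⟩ | ⟨rfl, rfl, h⟩)
    · exact ⟨by ring, by nlinarith [sq_nonneg s]⟩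
    · exact ⟨by ring, by simpa using h⟩

theorem eq_iff_of_det_ne_zero {a c : ℝ × ℝ} (hdet : a.1 * c.2 - a.2 * c.1 ≠ 0)
    {v w : ℝ × ℝ} :
    (a.1 * v.1 + a.2 * v.2 = a.1 * w.1 + a.2 * w.2 ∧
        c.1 * v.1 + c.2 * v.2 = c.1 * w.1 + c.2 * w.2) ↔ v = w := by
  constructor
  · rintro ⟨ha, hc⟩
    ext
    · exact mul_left_cancel₀ hdet (by linear_combination c.2 * ha - a.2 * hc)
    · exact mul_left_cancel₀ hdet (by linear_combination a.1 * hc - c.1 * ha)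
  · rintro rfl
    exact ⟨rfl, rfl⟩

/-- Characterization of the sail for intersecting lines: with `q` the unique
intersection point of `{α = 0}` and `{β = 0}`, a point `x + iy` lies in
`S(α, β)` iff either `α(x)β(x) < 0` and `y` is tangent to the line through
`x` and `q`, or `x = q`, `y ≠ 0`, and the line `x + ℝ·y` meets the region
`{αβ < 0}`. -/
theorem sail_intersecting_characterization (a c : ℝ × ℝ) (b d : ℝ)
    (q : ℝ × ℝ) (x y : ℝ × ℝ)
    (hlin : a.1 * c.2 - a.2 * c.1 ≠ 0)
    (hqa : a.1 * q.1 + a.2 * q.2 + b = 0)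
    (hqc : c.1 * q.1 + c.2 * q.2 + d = 0) :
    sailMem a b c d x y ↔
      (((a.1 * x.1 + a.2 * x.2 + b) * (c.1 * x.1 + c.2 * x.2 + d) < 0 ∧
          ∃ s : ℝ, y = (s * (x.1 - q.1), s * (x.2 - q.2))) ∨
       (x = q ∧ y ≠ (0, 0) ∧
          ∃ s : ℝ,
            (a.1 * (x.1 + s * y.1) + a.2 * (x.2 + s * y.2) + b) *
            (c.1 * (x.1 + s * y.1) + c.2 * (x.2 + s * y.2) + d) < 0)) := by
  rw [sailMem_iff, cross_eq_zero_and_dot_neg_iff]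
  refine or_congr (and_congr_right fun _ => exists_congr fun s => ?_) ⟨?_, ?_⟩
  · rw [← eq_iff_of_det_ne_zero hlin]
    constructor <;> rintro ⟨ha, hc⟩
    · exact ⟨by linear_combination ha + s * hqa, by linear_combination hc + s * hqc⟩
    · exact ⟨by linear_combination ha - s * hqa, by linear_combination hc - s * hqc⟩
  · rintro ⟨hA, hC, hy⟩
    have hxq : x = q := (eq_iff_of_det_ne_zero hlin).mp
      ⟨by linear_combination hA - hqa, by linear_combination hC - hqc⟩
    refine ⟨hxq, ?_, 1, ?_⟩
    · rintro rfl
      simp at hy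
    · rwa [show a.1 * (x.1 + 1 * y.1) + a.2 * (x.2 + 1 * y.2) + b = a.1 * y.1 + a.2 * y.2 by
          linear_combination hA,
        show c.1 * (x.1 + 1 * y.1) + c.2 * (x.2 + 1 * y.2) + d = c.1 * y.1 + c.2 * y.2 by
          linear_combination hC]
  · rintro ⟨rfl, -, s, hs⟩
    refine ⟨hqa, hqc, ?_⟩
    rw [show a.1 * (x.1 + s * y.1) + a.2 * (x.2 + s * y.2) + b = s * (a.1 * y.1 + a.2 * y.2) by
          linear_combination hqa,
        show c.1 * (x.1 + s * y.1) + c.2 * (x.2 + s * y.2) + d = s * (c.1 * y.1 + c.2 * y.2) by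
          linear_combination hqc] at hs
    exact neg_of_mul_neg_right (by linear_combination hs) (sq_nonneg s)
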